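/- arXiv:2509.10261 — 9 statements merged into one kernel-verified Lean document; each statement's English description precedes it below -/
import Mathlib

section
/- The Cartesian product K_{1,5} □ P_3 contains the complete bipartite graph K_{3,5} as a minor. (This is the content of the paper's Lemma showing K_{1,5} □ P_3 is not projective planar, since K_{3,5} is a forbidden minor for the projective plane.) -/
/-- `H` is a minor of `G`: there is an assignment of pairwise disjoint, connected,
nonempty branch sets in `G` to the vertices of `H`, with an edge of `G` between the
branch sets of any two adjacent vertices of `H`. -/
def SimpleGraph.IsMinorOf {W V : Type*} (H : SimpleGraph W) (G : SimpleGraph V) : Prop :=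
  ∃ φ : W → Set V,
    (∀ w, (G.induce (φ w)).Connected) ∧
    (Pairwise fun w w' => Disjoint (φ w) (φ w')) ∧
    ∀ ⦃w w'⦄, H.Adj w w' → ∃ a ∈ φ w, ∃ b ∈ φ w', G.Adj a b

lemma singleton_induce_connected {V : Type*} (G : SimpleGraph V) (a : V) :
    (G.induce {a}).Connected := by
  haveI : Nonempty ({a} : Set V) := ⟨⟨a, rfl⟩⟩
  refine SimpleGraph.Connected.mk fun u v => ?_
  obtain ⟨u, hu⟩ := u
  obtain ⟨v, hv⟩ := v
  simp only [Set.mem_singleton_iff] at hu hv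
  subst hu; subst hv
  rfl

/-- The Cartesian product `K_{1,5} □ P_3` contains `K_{3,5}` as a minor. -/
theorem k15_boxProd_p3_hasMinor_k35 :
    (completeBipartiteGraph (Fin 3) (Fin 5)).IsMinorOf
      ((completeBipartiteGraph (Fin 1) (Fin 5)) □ (SimpleGraph.pathGraph 3)) := by
  classical
  set G := (completeBipartiteGraph (Fin 1) (Fin 5)) □ (SimpleGraph.pathGraph 3) with hG
  refine ⟨fun w => Sum.elim (fun j => {((Sum.inl 0 : Fin 1 ⊕ Fin 5), j)})
    (fun i => {p | p.1 = Sum.inr i}) w, ?_, ?_, ?_⟩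
  · rintro (j | i)
    · exact singleton_induce_connected _ _
    · show (G.induce {p | p.1 = Sum.inr i}).Connected
      -- connectedness of the path column over leaf i
      have hmem : ((Sum.inr i : Fin 1 ⊕ Fin 5), (1 : Fin 3)) ∈
          ({p | p.1 = Sum.inr i} : Set ((Fin 1 ⊕ Fin 5) × Fin 3)) := rfl
      haveI : Nonempty ({p | p.1 = Sum.inr i} : Set ((Fin 1 ⊕ Fin 5) × Fin 3)) := ⟨⟨_, hmem⟩⟩
      refine SimpleGraph.Connected.mk fun u v => ?_
      have key : ∀ u : ({p | p.1 = Sum.inr i} : Set ((Fin 1 ⊕ Fin 5) × Fin 3)),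
          (G.induce {p | p.1 = Sum.inr i}).Reachable u ⟨_, hmem⟩ := by
        rintro ⟨⟨x, j⟩, hx⟩
        simp only [Set.mem_setOf_eq] at hx
        subst hx
        fin_cases j
        · exact SimpleGraph.Adj.reachable (by
            simp [SimpleGraph.comap_adj, hG, SimpleGraph.boxProd_adj,
              SimpleGraph.pathGraph_adj])
        · rfl
        · exact SimpleGraph.Adj.reachable (by
            simp [SimpleGraph.comap_adj, hG, SimpleGraph.boxProd_adj,
              SimpleGraph.pathGraph_adj])
      exact (key u).trans (key v).symm
  · rintro (j | i) (j' | i') hne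
    · simp only [Sum.elim_inl, Set.disjoint_singleton]
      intro h
      rw [Prod.mk.injEq] at h
      exact hne (congrArg Sum.inl h.2)
    · simp only [Sum.elim_inl, Sum.elim_inr, Set.disjoint_left]
      rintro p rfl hp
      simp at hp
    · simp only [Sum.elim_inl, Sum.elim_inr, Set.disjoint_left]
      rintro p hp rfl
      simp at hp
    · have : i ≠ i' := fun h => hne (by rw [h])
      simp only [Sum.elim_inr, Set.disjoint_left]
      rintro ⟨x, j⟩ hx hx'
      simp only [Set.mem_setOf_eq] at hx hx'
      exact this (Sum.inr.inj (hx ▸ hx'))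
  · rintro (j | i) (j' | i') h
    · simp at h
    · exact ⟨_, rfl, (Sum.inr i', j), rfl, by
        simp [hG, SimpleGraph.boxProd_adj]⟩
    · exact ⟨(Sum.inr i, j'), rfl, _, rfl, by
        simp [hG, SimpleGraph.boxProd_adj]⟩
    · simp at h
end

section
/- The Cartesian product K_{1,4} □ K_{1,3} contains the graph K_{4,4} minus one edge as a minor. (This is the content of the paper's Lemma showing K_{1,4} □ K_{1,3} is not projective planar, since K_{4,4} − e is a forbidden minor for the projective plane.) -/
namespace SimpleGraph

variable {U V W W' : Type*}

theorem IsMinorOf.of_isContained {H' : SimpleGraph W'} {H : SimpleGraph W} {G : SimpleGraph V}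
    (h : H.IsMinorOf G) (hc : H' ⊑ H) : H'.IsMinorOf G := by
  obtain ⟨f⟩ := hc
  obtain ⟨φ, hconn, hdisj, hadj⟩ := h
  exact ⟨φ ∘ f, fun w => hconn (f w), fun _ _ hne => hdisj (f.injective.ne hne),
    fun _ _ hww' => hadj (f.toHom.map_adj hww')⟩

theorem completeBipartiteGraph_connected [Nonempty V] [Nonempty W] :
    (completeBipartiteGraph V W).Connected := by
  obtain ⟨v⟩ := ‹Nonempty V›
  obtain ⟨w⟩ := ‹Nonempty W›
  have hwv : (completeBipartiteGraph V W).Adj (.inr w) (.inl v) := by simp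
  have reach : ∀ x, (completeBipartiteGraph V W).Reachable (.inr w) x := by
    rintro (v' | w')
    · exact Adj.reachable (by simp)
    · exact hwv.reachable.trans (Adj.reachable (by simp))
  exact ⟨fun x y => (reach x).symm.trans (reach y)⟩

theorem connected_induce_boxProd_fiber (G : SimpleGraph U) {H : SimpleGraph V}
    (hH : H.Connected) (u : U) : ((G □ H).induce {p | p.1 = u}).Connected :=
  hH.map ⟨fun v => ⟨(u, v), rfl⟩, fun h => boxProd_adj_right.mpr h⟩
    (by rintro ⟨⟨u', v⟩, rfl : u' = u⟩; exact ⟨v, rfl⟩)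

theorem completeBipartiteGraph_isMinorOf_completeBipartiteGraph_boxProd [Nonempty U]
    {H : SimpleGraph V} (hH : H.Connected) :
    (completeBipartiteGraph W V).IsMinorOf (completeBipartiteGraph U W □ H) := by
  let u : U := Classical.arbitrary U
  refine ⟨Sum.elim (fun w => {p | p.1 = .inr w}) (fun v => {(.inl u, v)}), ?_, ?_, ?_⟩
  · rintro (w | v)
    · exact connected_induce_boxProd_fiber _ hH _
    · simp
  · rintro (w | v) (w' | v') hne <;> simp only [ne_eq, Sum.inl.injEq, Sum.inr.injEq] at hne <;>
      simp [Set.disjoint_left, hne]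
  · rintro (w | v) (w' | v') h
    · simp at h
    · exact ⟨(.inr w, v'), rfl, (.inl u, v'), rfl, boxProd_adj_left.mpr (by simp)⟩
    · exact ⟨(.inl u, v), rfl, (.inr w', v), rfl, boxProd_adj_left.mpr (by simp)⟩
    · simp at h

end SimpleGraph

open SimpleGraph in
/-- The Cartesian product `K_{1,4} □ K_{1,3}` contains `K_{4,4}` minus one edge as a minor. -/
theorem k14_boxProd_k13_hasMinor_k44_minus_e :
    ((completeBipartiteGraph (Fin 4) (Fin 4)).deleteEdges
        {s(Sum.inl 0, Sum.inr 0)}).IsMinorOf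
      ((completeBipartiteGraph (Fin 1) (Fin 4)) □ (completeBipartiteGraph (Fin 1) (Fin 3))) :=
  (completeBipartiteGraph_isMinorOf_completeBipartiteGraph_boxProd
      completeBipartiteGraph_connected).of_isContained <|
    IsContained.mono_left (deleteEdges_le _)
      (completeBipartiteGraphCongr (.refl _) (finSumFinEquiv (m := 1) (n := 3)).symm).toCopy.isContained
end

section
/- The Cartesian product K_{1,3} □ P_3 contains the complete bipartite graph K_{3,3} as a minor. -/
private lemma induce_singleton_connected {V : Type*} (G : SimpleGraph V) (v : V) :
    (G.induce {v}).Connected := by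
  haveI : Nonempty ({v} : Set V) := ⟨⟨v, rfl⟩⟩
  exact ⟨fun a b => by rw [Subsingleton.elim a b]⟩

/-- The Cartesian product `K_{1,3} □ P_3` contains `K_{3,3}` as a minor. -/
theorem k13_boxProd_p3_hasMinor_k33 :
    (completeBipartiteGraph (Fin 3) (Fin 3)).IsMinorOf
      ((completeBipartiteGraph (Fin 1) (Fin 3)) □ (SimpleGraph.pathGraph 3)) := by
  classical
  set G := (completeBipartiteGraph (Fin 1) (Fin 3)) □ (SimpleGraph.pathGraph 3) with hG
  refine ⟨fun w => Sum.elim (fun j => {(Sum.inl 0, j)})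
      (fun i => {p | p.1 = Sum.inr i}) w, ?_, ?_, ?_⟩
  · rintro (j | i)
    · exact induce_singleton_connected _ _
    · set S : Set ((Fin 1 ⊕ Fin 3) × Fin 3) := {p | p.1 = Sum.inr i} with hS
      have hmem : ∀ k : Fin 3, (Sum.inr i, k) ∈ S := fun _ => rfl
      have key : ∀ k : Fin 3,
          (G.induce S).Reachable ⟨(Sum.inr i, k), hmem k⟩ ⟨(Sum.inr i, 1), hmem 1⟩ := by
        intro k
        fin_cases k
        · exact SimpleGraph.Adj.reachable
            (Or.inr ⟨by simp [SimpleGraph.pathGraph_adj], rfl⟩)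
        · exact SimpleGraph.Reachable.refl _
        · exact SimpleGraph.Adj.reachable
            (Or.inr ⟨by simp [SimpleGraph.pathGraph_adj], rfl⟩)
      haveI : Nonempty S := ⟨⟨(Sum.inr i, 1), hmem 1⟩⟩
      show (G.induce S).Connected
      refine ⟨fun a b => ?_⟩
      obtain ⟨⟨q, k⟩, (hq : q = Sum.inr i)⟩ := a
      obtain ⟨⟨q', k'⟩, (hq' : q' = Sum.inr i)⟩ := b
      subst hq; subst hq'
      exact (key k).trans (key k').symm
  · rintro (j | i) (j' | i') hne <;> simp_all [Set.disjoint_left, Prod.ext_iff]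
  · intro w w' h
    match w, w', h with
    | Sum.inl j, Sum.inr i, _ =>
      exact ⟨(Sum.inl 0, j), rfl, (Sum.inr i, j), rfl, Or.inl ⟨by simp, rfl⟩⟩
    | Sum.inr i, Sum.inl j, _ =>
      exact ⟨(Sum.inr i, j), rfl, (Sum.inl 0, j), rfl, Or.inl ⟨by simp, rfl⟩⟩
    | Sum.inl j, Sum.inl j', h => exact absurd h (by simp)
    | Sum.inr i, Sum.inr i', h => exact absurd h (by simp)
end

section
/- The Cartesian product I □ P_3 contains the graph 𝒢₁ as a minor. (This is the content of the paper's Lemma showing I □ P_3 is not projective planar, since 𝒢₁ is a forbidden minor for the projective plane.) -/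
/-- The graph `𝒢₁`: the Cartesian product `K_{2,3} □ P_2` with the two `P_2`-fiber edges
joining the copies of the two degree-3 vertices of `K_{2,3}` deleted.  Equivalently, two
disjoint copies of `K_{2,3}` together with a perfect matching between their
three-vertex parts. -/
def GraphG1 : SimpleGraph ((Fin 2 ⊕ Fin 3) × Fin 2) :=
  ((completeBipartiteGraph (Fin 2) (Fin 3)) □ (SimpleGraph.pathGraph 2)).deleteEdges
    {s((Sum.inl 0, 0), (Sum.inl 0, 1)), s((Sum.inl 1, 0), (Sum.inl 1, 1))}

/-- The graph `I`: the six-vertex double star obtained from an edge `uv` by attaching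
two pendant vertices to `u` and two pendant vertices to `v`. -/
def GraphI : SimpleGraph (Fin 6) :=
  SimpleGraph.fromEdgeSet {s(0, 1), s(0, 2), s(0, 3), s(1, 4), s(1, 5)}

namespace MinorAux

instance : DecidableRel GraphI.Adj := fun u v =>
  decidable_of_iff ((s(u,v) = s(0,1) ∨ s(u,v) = s(0,2) ∨ s(u,v) = s(0,3) ∨ s(u,v) = s(1,4) ∨ s(u,v) = s(1,5)) ∧ u ≠ v)
    (by simp [GraphI, SimpleGraph.fromEdgeSet_adj])

instance pg3 : DecidableRel (SimpleGraph.pathGraph 3).Adj := fun u v =>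
  decidable_of_iff (u.val + 1 = v.val ∨ v.val + 1 = u.val) (SimpleGraph.pathGraph_adj).symm

instance pg2 : DecidableRel (SimpleGraph.pathGraph 2).Adj := fun u v =>
  decidable_of_iff (u.val + 1 = v.val ∨ v.val + 1 = u.val) (SimpleGraph.pathGraph_adj).symm

instance bigG : DecidableRel (GraphI □ (SimpleGraph.pathGraph 3)).Adj := fun u v =>
  decidable_of_iff (GraphI.Adj u.1 v.1 ∧ u.2 = v.2 ∨ (SimpleGraph.pathGraph 3).Adj u.2 v.2 ∧ u.1 = v.1)
    (SimpleGraph.boxProd_adj).symm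

instance cb : DecidableRel (completeBipartiteGraph (Fin 2) (Fin 3)).Adj := fun u v =>
  decidable_of_iff (u.isLeft ∧ v.isRight ∨ u.isRight ∧ v.isLeft) Iff.rfl

instance cbp : DecidableRel ((completeBipartiteGraph (Fin 2) (Fin 3)) □ (SimpleGraph.pathGraph 2)).Adj := fun u v =>
  decidable_of_iff ((completeBipartiteGraph (Fin 2) (Fin 3)).Adj u.1 v.1 ∧ u.2 = v.2 ∨ (SimpleGraph.pathGraph 2).Adj u.2 v.2 ∧ u.1 = v.1)
    (SimpleGraph.boxProd_adj).symm

instance g1 : DecidableRel GraphG1.Adj := fun u v =>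
  decidable_of_iff (((completeBipartiteGraph (Fin 2) (Fin 3)) □ (SimpleGraph.pathGraph 2)).Adj u v ∧
      ¬(s(u,v) = s((Sum.inl 0, 0), (Sum.inl 0, 1)) ∨ s(u,v) = s((Sum.inl 1, 0), (Sum.inl 1, 1))))
    (by simp [GraphG1, SimpleGraph.deleteEdges_adj])

/-- Branch-set membership (as a Boolean predicate): the branch set of `(inl i, t)`
is the pendant column `2 + i + 2t` of `I □ P₃`; the branch set of `(inr j, t)` is the
singleton `{(t, j)}`. -/
def memB : (Fin 2 ⊕ Fin 3) × Fin 2 → Fin 6 × Fin 3 → Bool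
  | (Sum.inl i, t), x => x.1.val == 2 + i.val + 2 * t.val
  | (Sum.inr j, t), x => x.1.val == t.val && x.2 == j

/-- The branch sets. -/
def φ (w : (Fin 2 ⊕ Fin 3) × Fin 2) : Set (Fin 6 × Fin 3) := {x | memB w x}

instance (w : (Fin 2 ⊕ Fin 3) × Fin 2) : DecidablePred (· ∈ φ w) := fun x =>
  decidable_of_iff (memB w x) Iff.rfl

end MinorAux

open MinorAux in
/-- The Cartesian product `I □ P_3` contains `𝒢₁` as a minor. -/
theorem I_boxProd_p3_hasMinor_G1 :
    GraphG1.IsMinorOf (GraphI □ (SimpleGraph.pathGraph 3)) := by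
  refine ⟨φ, ?_, ?_, ?_⟩
  · have hpre : ∀ w, ((GraphI □ (SimpleGraph.pathGraph 3)).induce (φ w)).Preconnected := by decide
    have hne : ∀ w, ∃ x, x ∈ φ w := by decide
    intro w
    rw [SimpleGraph.connected_iff]
    exact ⟨hpre w, Set.Nonempty.to_subtype (hne w)⟩
  · have h : ∀ w w', w ≠ w' → ∀ x, memB w x → ¬ memB w' x := by decide
    intro w w' hww
    rw [Set.disjoint_left]
    exact fun {x} hx => h w w' hww x hx
  · decide
end

section
/- The Cartesian product R □ C_3 contains the graph 𝒢₁ as a minor. (This is the content of the paper's Lemma showing R □ C_3 is not projective planar, since 𝒢₁ is a forbidden minor for the projective plane.) -/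
/-- The graph `R`: the five-vertex graph obtained from a 3-cycle on `{0,1,2}` by
attaching two pendant vertices `3`, `4` to the vertex `0` of the cycle. -/
def GraphR : SimpleGraph (Fin 5) :=
  SimpleGraph.fromEdgeSet {s(0, 1), s(1, 2), s(0, 2), s(0, 3), s(0, 4)}

instance : DecidableRel GraphR.Adj := fun a b =>
  decidable_of_iff (s(a,b) ∈ ({s(0, 1), s(1, 2), s(0, 2), s(0, 3), s(0, 4)} : Finset (Sym2 (Fin 5))) ∧ a ≠ b)
    (by rw [GraphR, SimpleGraph.fromEdgeSet_adj]; simp)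

instance {α β : Type*} (G : SimpleGraph α) (H : SimpleGraph β) [DecidableEq α] [DecidableEq β]
    [DecidableRel G.Adj] [DecidableRel H.Adj] : DecidableRel (G □ H).Adj := fun x y =>
  decidable_of_iff ((G.Adj x.1 y.1 ∧ x.2 = y.2) ∨ (H.Adj x.2 y.2 ∧ x.1 = y.1))
    (SimpleGraph.boxProd_adj).symm

instance {n : ℕ} : DecidableRel (SimpleGraph.pathGraph n).Adj := fun _ _ =>
  decidable_of_iff _ (SimpleGraph.pathGraph_adj).symm

instance {α β : Type*} [DecidableEq α] [DecidableEq β] :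
    DecidableRel (completeBipartiteGraph α β).Adj := fun a b =>
  inferInstanceAs (Decidable (a.isLeft ∧ b.isRight ∨ a.isRight ∧ b.isLeft))

instance : DecidableRel GraphG1.Adj := fun a b =>
  decidable_of_iff (((completeBipartiteGraph (Fin 2) (Fin 3)) □ (SimpleGraph.pathGraph 2)).Adj a b
      ∧ s(a,b) ∉ ({s((Sum.inl 0, 0), (Sum.inl 0, 1)), s((Sum.inl 1, 0), (Sum.inl 1, 1))} : Finset (Sym2 _)))
    (by rw [GraphG1, SimpleGraph.deleteEdges_adj]; simp)

def phiF : (Fin 2 ⊕ Fin 3) × Fin 2 → Finset (Fin 5 × Fin 3)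
  | (Sum.inl ⟨0,_⟩, ⟨0,_⟩) => {(3,0),(3,1),(3,2)}
  | (Sum.inl ⟨_,_⟩, ⟨0,_⟩) => {(4,0),(4,1),(4,2)}
  | (Sum.inr c, ⟨0,_⟩) => {(0,c)}
  | (Sum.inl ⟨0,_⟩, ⟨_,_⟩) => {(2,0),(2,2)}
  | (Sum.inl ⟨_,_⟩, ⟨_,_⟩) => {(1,1)}
  | (Sum.inr ⟨0,_⟩, ⟨_,_⟩) => {(1,0)}
  | (Sum.inr ⟨1,_⟩, ⟨_,_⟩) => {(2,1)}
  | (Sum.inr ⟨_,_⟩, ⟨_,_⟩) => {(1,2)}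

def phi (w : (Fin 2 ⊕ Fin 3) × Fin 2) : Set (Fin 5 × Fin 3) := ↑(phiF w)

instance (w : (Fin 2 ⊕ Fin 3) × Fin 2) : DecidablePred (· ∈ phi w) := fun x =>
  decidable_of_iff (x ∈ phiF w) Finset.mem_coe

instance instDecForallAdj : Decidable (∀ w w' : (Fin 2 ⊕ Fin 3) × Fin 2, GraphG1.Adj w w' →
    ∃ a ∈ phi w, ∃ b ∈ phi w', (GraphR □ SimpleGraph.cycleGraph 3).Adj a b) :=
  @Fintype.decidableForallFintype _ _
    (fun _ => @Fintype.decidableForallFintype _ _ (fun _ => inferInstance) _) _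

/-- The Cartesian product `R □ C_3` contains `𝒢₁` as a minor. -/
theorem R_boxProd_c3_hasMinor_G1 :
    GraphG1.IsMinorOf (GraphR □ (SimpleGraph.cycleGraph 3)) := by
  refine ⟨phi, ?_, ?_, ?_⟩
  · have hpre : ∀ w, ((GraphR □ SimpleGraph.cycleGraph 3).induce (phi w)).Preconnected := by
      decide
    have hne : ∀ w, (phiF w).Nonempty := by decide
    intro w
    haveI : Nonempty ↑(phi w) := ⟨⟨(hne w).choose, Finset.mem_coe.mpr (hne w).choose_spec⟩⟩
    exact ⟨hpre w⟩
  · have h : ∀ w w' : (Fin 2 ⊕ Fin 3) × Fin 2, w ≠ w' → ∀ a, a ∈ phi w → a ∉ phi w' := by decide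
    exact fun w w' hne => Set.disjoint_left.mpr (h w w' hne)
  · have h : ∀ w w' : (Fin 2 ⊕ Fin 3) × Fin 2, GraphG1.Adj w w' →
        ∃ a ∈ phi w, ∃ b ∈ phi w', (GraphR □ SimpleGraph.cycleGraph 3).Adj a b := by decide
    exact fun w w' => h w w'
end

section
/- Let G be a finite simple connected graph containing two vertex-disjoint cycles. Then G contains the graph I as a minor. -/
namespace SimpleGraph

variable {V : Type*} {G : SimpleGraph V}

theorem Preconnected.exists_isPath_between_sets (hG : G.Preconnected) {S T : Set V} {s t : V}
    (hs : s ∈ S) (ht : t ∈ T) :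
    ∃ a ∈ S, ∃ b ∈ T, ∃ P : G.Walk a b,
      P.IsPath ∧ ∀ x ∈ P.support, (x ∈ S → x = a) ∧ (x ∈ T → x = b) := by
  classical
  have hex : ∃ n, ∃ a ∈ S, ∃ b ∈ T, ∃ P : G.Walk a b, P.IsPath ∧ P.length = n :=
    ⟨_, s, hs, t, ht, _, (hG s t).some.toPath.2, rfl⟩
  obtain ⟨a, ha, b, hb, P, hP, hlen⟩ := Nat.find_spec hex
  refine ⟨a, ha, b, hb, P, hP, fun x hx => ⟨fun hxS => ?_, fun hxT => ?_⟩⟩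
  · by_contra hxa
    exact Nat.find_min hex (hlen ▸ P.length_dropUntil_lt_length hx hxa)
      ⟨x, hxS, b, hb, _, hP.dropUntil hx, rfl⟩
  · by_contra hxb
    exact Nat.find_min hex (hlen ▸ P.length_takeUntil_lt_length hx hxb)
      ⟨a, ha, x, hxT, _, hP.takeUntil hx, rfl⟩

theorem Walk.IsCycle.exists_adj_ne {u v : V} {c : G.Walk u u} (hc : c.IsCycle)
    (hv : v ∈ c.support) :
    ∃ p ∈ c.support, ∃ q ∈ c.support, p ≠ q ∧ G.Adj v p ∧ G.Adj v q := by
  classical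
  have hd := hc.rotate hv
  set d := c.rotate v hv
  have hnil := hd.not_nil
  exact ⟨d.snd, (c.mem_support_rotate_iff v hv).1 (d.getVert_mem_support 1),
    d.penultimate, (c.mem_support_rotate_iff v hv).1 (d.getVert_mem_support _),
    hd.snd_ne_penultimate, d.adj_snd hnil, (d.adj_penultimate hnil).symm⟩

theorem Walk.IsPath.exists_walk_avoiding_end {a b : V} {P : G.Walk a b}
    (hP : P.IsPath) (hab : a ≠ b) :
    ∃ z, G.Adj z b ∧ ∃ Q : G.Walk z a, b ∉ Q.support ∧ Q.support ⊆ P.support := by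
  have hnil : ¬P.reverse.Nil := Walk.not_nil_of_ne hab.symm
  have hsupp : b :: P.reverse.tail.support = P.reverse.support := Walk.cons_support_tail hnil
  refine ⟨_, (P.reverse.adj_snd hnil).symm, P.reverse.tail,
    (List.nodup_cons.mp (hsupp ▸ hP.reverse.support_nodup)).1, fun x hx => ?_⟩
  simpa only [hsupp, Walk.support_reverse, List.mem_reverse] using List.mem_cons_of_mem b hx

theorem connected_induce_singleton (v : V) : (G.induce {v}).Connected :=
  Connected.mk Preconnected.of_subsingleton

theorem graphI_isMinorOf {A : Set V} {a z b p q p' q' : V} (hA : (G.induce A).Connected)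
    (ha : a ∈ A) (hz : z ∈ A) (hzb : G.Adj z b) (hap : G.Adj a p) (haq : G.Adj a q)
    (hbp' : G.Adj b p') (hbq' : G.Adj b q') (hnodup : [b, p, q, p', q'].Nodup)
    (hA_out : ∀ x ∈ [b, p, q, p', q'], x ∉ A) : GraphI.IsMinorOf G := by
  simp only [List.mem_cons, List.not_mem_nil, or_false, forall_eq_or_imp, forall_eq] at hA_out
  simp only [List.nodup_cons, List.mem_cons, List.not_mem_nil, or_false, not_or] at hnodup
  refine ⟨![A, {b}, {p}, {q}, {p'}, {q'}], fun i => ?_, fun i j hij => ?_, fun i j hij => ?_⟩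
  · fin_cases i <;> first | exact hA | exact connected_induce_singleton _
  · fin_cases i <;> fin_cases j <;> simp_all [eq_comm]
  · fin_cases i <;> fin_cases j <;> simp [GraphI] at hij ⊢ <;> grind [G.adj_symm]

end SimpleGraph

theorem disjoint_cycles_I_minor_general {V : Type*} (G : SimpleGraph V)
    (hconn : G.Connected) {u u' : V} (c : G.Walk u u) (c' : G.Walk u' u')
    (hc : c.IsCycle) (hc' : c'.IsCycle)
    (hdisj : ∀ v, v ∈ c.support → v ∉ c'.support) :
    GraphI.IsMinorOf G := by
  have hne : ∀ x ∈ c.support, ∀ y ∈ c'.support, x ≠ y := fun x hx y hy h =>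
    hdisj x hx (h ▸ hy)
  obtain ⟨a, ha, b, hb, P, hP, hP_meets⟩ :=
    hconn.preconnected.exists_isPath_between_sets (S := {x | x ∈ c.support})
      (T := {x | x ∈ c'.support}) c.start_mem_support c'.start_mem_support
  obtain ⟨p, hp, q, hq, hpq, hap, haq⟩ := hc.exists_adj_ne ha
  obtain ⟨p', hp', q', hq', hpq', hbp', hbq'⟩ := hc'.exists_adj_ne hb
  obtain ⟨z, hzb, Q, hbQ, hQP⟩ := hP.exists_walk_avoiding_end (hne a ha b hb)
  refine SimpleGraph.graphI_isMinorOf Q.connected_induce_support Q.end_mem_support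
    Q.start_mem_support hzb hap haq hbp' hbq' ?_ ?_
  · simp only [List.nodup_cons, List.mem_cons, List.not_mem_nil, or_false, not_or,
      List.nodup_nil, not_false_eq_true, and_true]
    exact ⟨⟨(hne p hp b hb).symm, (hne q hq b hb).symm, hbp'.ne, hbq'.ne⟩,
      ⟨hpq, hne p hp p' hp', hne p hp q' hq'⟩, ⟨hne q hq p' hp', hne q hq q' hq'⟩, hpq'⟩
  · have h_near_a : ∀ x ∈ c.support, G.Adj a x → x ∉ Q.support := fun x hx hax hxQ =>
      hax.ne ((hP_meets x (hQP hxQ)).1 hx).symm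
    have h_on_c' : ∀ x ∈ c'.support, x ∉ Q.support := fun x hx hxQ =>
      hbQ ((hP_meets x (hQP hxQ)).2 hx ▸ hxQ)
    simp only [List.mem_cons, List.not_mem_nil, or_false, forall_eq_or_imp, forall_eq]
    exact ⟨hbQ, h_near_a p hp hap, h_near_a q hq haq, h_on_c' p' hp', h_on_c' q' hq'⟩

/-- A finite simple connected graph containing two vertex-disjoint cycles contains
the double star `I` as a minor. -/
theorem disjoint_cycles_I_minor {V : Type*} [Fintype V] (G : SimpleGraph V)
    (hconn : G.Connected) {u u' : V} (c : G.Walk u u) (c' : G.Walk u' u')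
    (hc : c.IsCycle) (hc' : c'.IsCycle)
    (hdisj : ∀ v, v ∈ c.support → v ∉ c'.support) :
    GraphI.IsMinorOf G :=
  disjoint_cycles_I_minor_general G hconn c c' hc hc' hdisj
end

section
/- Let G be a graph containing two distinct cycles C and C' whose intersection contains at least two distinct vertices. Then either G contains K_{2,3} as a minor, or G contains two distinct cycles D and D' whose intersection consists of exactly one edge together with its two endpoints. -/
namespace SimpleGraph

variable {V : Type*} {G : SimpleGraph V}

def HasTwoCyclesSharingOneEdge (G : SimpleGraph V) : Prop :=
  ∃ (x y : V) (d : G.Walk x x) (d' : G.Walk y y),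
    d.IsCycle ∧ d'.IsCycle ∧
    {e : Sym2 V | e ∈ d.edges} ≠ {e : Sym2 V | e ∈ d'.edges} ∧
    ∃ a b : V, G.Adj a b ∧
      s(a, b) ∈ d.edges ∧ s(a, b) ∈ d'.edges ∧
      (∀ e, e ∈ d.edges → e ∈ d'.edges → e = s(a, b)) ∧
      (∀ v, v ∈ d.support → v ∈ d'.support → v = a ∨ v = b)

lemma completeBipartiteGraph_fin_two_isMinorOf {ι : Type*} {x y : V} (hxy : x ≠ y)
    (S : ι → Set V) (hconn : ∀ i, (G.induce (S i)).Connected)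
    (hdisj : Pairwise fun i j => Disjoint (S i) (S j)) (hx : ∀ i, x ∉ S i) (hy : ∀ i, y ∉ S i)
    (hxS : ∀ i, ∃ a ∈ S i, G.Adj x a) (hyS : ∀ i, ∃ b ∈ S i, G.Adj y b) :
    (completeBipartiteGraph (Fin 2) ι).IsMinorOf G := by
  refine ⟨Sum.elim ![{x}, {y}] S, ?_, ?_, ?_⟩
  · rintro (i | i)
    · fin_cases i <;> simp [connected_top]
    · exact hconn i
  · rintro (i | i) (j | j) hij
    · fin_cases i <;> fin_cases j <;> simp_all [hxy.symm]
    · fin_cases i <;> simp [hx, hy]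
    · fin_cases j <;> simp [hx, hy]
    · exact hdisj (ne_of_apply_ne Sum.inr hij)
  · rintro (i | i) (j | j) hij
    · simp at hij
    · fin_cases i
      · simpa using hxS j
      · simpa using hyS j
    · fin_cases j
      · obtain ⟨a, ha, hxa⟩ := hxS i; exact ⟨a, ha, x, rfl, hxa.symm⟩
      · obtain ⟨b, hb, hyb⟩ := hyS i; exact ⟨b, hb, y, rfl, hyb.symm⟩
    · simp at hij

namespace Walk

def InternallyDisjoint {x y : V} (p q : G.Walk x y) : Prop :=
  (∀ z ∈ p.support, z ∈ q.support → z = x ∨ z = y) ∧ p.edges.Disjoint q.edges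

lemma InternallyDisjoint.symm {x y : V} {p q : G.Walk x y} (h : p.InternallyDisjoint q) :
    q.InternallyDisjoint p :=
  ⟨fun z hq hp => h.1 z hp hq, h.2.symm⟩

lemma IsPath.exists_interior {x y : V} {p : G.Walk x y} (hp : p.IsPath) (hxy : x ≠ y)
    (hadj : ¬ G.Adj x y) :
    ∃ (a b : V) (m : G.Walk a b), G.Adj x a ∧ G.Adj y b ∧ x ∉ m.support ∧ y ∉ m.support ∧
      ∀ z ∈ m.support, z ∈ p.support := by
  obtain _ | ⟨hxa, _ | ⟨hab, q⟩⟩ := p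
  · exact absurd rfl hxy
  · exact absurd hxa hadj
  · obtain ⟨b, m, hby, hq⟩ := exists_cons_eq_concat hab q
    have hnd := hp.support_nodup
    rw [hq] at hnd ⊢
    simp only [support_cons, support_concat, List.nodup_cons, List.nodup_append, List.mem_append,
      List.mem_singleton] at hnd
    refine ⟨_, b, m, hxa, hby.symm, fun h => hnd.1 (.inl h), fun h => ?_, by simp +contextual⟩
    simpa using hnd.2.2.2 y h y

lemma hasTwoCyclesSharingOneEdge_of_internallyDisjoint {x y : V} (h : G.Adj x y)
    {p q : G.Walk x y} (hp : p.IsPath) (hq : q.IsPath) (hpq : p.InternallyDisjoint q)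
    (hpe : s(x, y) ∉ p.edges) (hqe : s(x, y) ∉ q.edges) : G.HasTwoCyclesSharingOneEdge := by
  have hd : (cons h p.reverse).IsCycle := (cons_isCycle_iff _ h).2 ⟨hp.reverse, by simpa using hpe⟩
  have hd' : (cons h q.reverse).IsCycle := (cons_isCycle_iff _ h).2 ⟨hq.reverse, by simpa using hqe⟩
  obtain ⟨e, he⟩ : ∃ e, e ∈ p.edges := ⟨_, mk_start_snd_mem_edges (not_nil_of_ne h.ne)⟩
  refine ⟨x, x, _, _, hd, hd', fun hset => ?_, x, y, h, by simp, by simp, ?_, ?_⟩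
  · have : e ∈ (cons h q.reverse).edges := by
      change e ∈ {e | e ∈ (cons h q.reverse).edges}
      rw [← hset]
      simp [he]
    simp only [edges_cons, edges_reverse, List.mem_cons, List.mem_reverse] at this
    rcases this with rfl | heq
    exacts [hpe he, hpq.2 he heq]
  · intro e h1 h2
    simp only [edges_cons, edges_reverse, List.mem_cons, List.mem_reverse] at h1 h2
    rcases h1 with rfl | h1
    · rfl
    rcases h2 with rfl | h2
    · rfl
    exact absurd h2 (hpq.2 h1)
  · intro z h1 h2
    simp only [support_cons, support_reverse, List.mem_cons, List.mem_reverse] at h1 h2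
    rcases h1 with rfl | h1
    · exact .inl rfl
    rcases h2 with rfl | h2
    · exact .inl rfl
    exact hpq.1 z h1 h2

end Walk

theorem completeBipartiteGraph_isMinorOf_or_hasTwoCyclesSharingOneEdge_of_paths {x y : V}
    (hxy : x ≠ y) (P : Fin 3 → G.Walk x y) (hP : ∀ i, (P i).IsPath)
    (hdisj : Pairwise fun i j => (P i).InternallyDisjoint (P j)) :
    (completeBipartiteGraph (Fin 2) (Fin 3)).IsMinorOf G ∨ G.HasTwoCyclesSharingOneEdge := by
  by_cases hadj : G.Adj x y
  · right
    have hmem_unique : ∀ i j, i ≠ j → s(x, y) ∈ (P i).edges → s(x, y) ∉ (P j).edges :=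
      fun i j hij hi hj => (hdisj hij).2 hi hj
    obtain ⟨i, j, hij, hi, hj⟩ : ∃ i j, i ≠ j ∧ s(x, y) ∉ (P i).edges ∧ s(x, y) ∉ (P j).edges := by
      by_cases h0 : s(x, y) ∈ (P 0).edges
      · exact ⟨1, 2, by decide, hmem_unique 0 1 (by decide) h0, hmem_unique 0 2 (by decide) h0⟩
      by_cases h1 : s(x, y) ∈ (P 1).edges
      · exact ⟨0, 2, by decide, h0, hmem_unique 1 2 (by decide) h1⟩
      · exact ⟨0, 1, by decide, h0, h1⟩
    exact Walk.hasTwoCyclesSharingOneEdge_of_internallyDisjoint hadj (hP i) (hP j) (hdisj hij) hi hj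
  · left
    choose a b m hxa hyb hxm hym hmP using fun i => (hP i).exists_interior hxy hadj
    refine completeBipartiteGraph_fin_two_isMinorOf hxy (fun i => {z | z ∈ (m i).support})
      (fun i => (m i).connected_induce_support) (fun i j hij => ?_) hxm hym
      (fun i => ⟨a i, (m i).start_mem_support, hxa i⟩)
      (fun i => ⟨b i, (m i).end_mem_support, hyb i⟩)
    refine Set.disjoint_left.2 fun z hzi hzj => ?_
    rcases (hdisj hij).1 z (hmP i z hzi) (hmP j z hzj) with rfl | rfl
    exacts [hxm i hzi, hym i hzi]

namespace Walk

lemma IsCycle.exists_internallyDisjoint_paths {u x y : V} {c : G.Walk u u} (hc : c.IsCycle)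
    (hx : x ∈ c.support) (hy : y ∈ c.support) (hxy : x ≠ y) :
    ∃ p q : G.Walk x y, p.IsPath ∧ q.IsPath ∧ p.InternallyDisjoint q ∧
      (∀ z, z ∈ c.support ↔ z ∈ p.support ∨ z ∈ q.support) ∧
      p.edges ⊆ c.edges ∧ q.edges ⊆ c.edges := by
  classical
  set c₁ := c.rotate x hx
  have hc₁ : c₁.IsCycle := hc.rotate hx
  have hy₁ : y ∈ c₁.support := (c.mem_support_rotate_iff x hx).2 hy
  set p := c₁.takeUntil y hy₁
  set q := c₁.dropUntil y hy₁
  have hpq : p.append q = c₁ := c₁.take_spec hy₁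
  have hq : q.IsPath := IsCycle.isPath_of_append_right (not_nil_of_ne hxy) (by rwa [hpq])
  have hc₁e : c₁.edges ⊆ c.edges := (c.rotate_edges x hx).perm.subset
  refine ⟨p, q.reverse, hc₁.isPath_takeUntil hy₁, hq.reverse, ⟨fun z hzp hzq => ?_, ?_⟩,
    fun z => ?_, fun e he => hc₁e (c₁.edges_takeUntil_subset_edges hy₁ he),
    fun e he => hc₁e (c₁.edges_dropUntil_subset_edges hy₁ (by simpa using he))⟩
  · have hnd := hc₁.support_nodup
    rw [← hpq, tail_support_append, List.nodup_append'] at hnd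
    rw [support_reverse, List.mem_reverse] at hzq
    rcases p.mem_support_iff.1 hzp with rfl | hzp
    · exact .inl rfl
    rcases q.mem_support_iff.1 hzq with rfl | hzq
    · exact .inr rfl
    exact absurd hzq (hnd.2.2 hzp)
  · rw [edges_reverse, List.disjoint_reverse_right]
    exact hc₁.isTrail.disjoint_edges_takeUntil_dropUntil hy₁
  · rw [← c.mem_support_rotate_iff x hx]
    change z ∈ c₁.support ↔ _
    rw [← hpq, mem_support_append_iff, support_reverse, List.mem_reverse]

lemma IsPath.exists_subpath_to_first_mem (S : Set V) {a b : V} {W : G.Walk a b}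
    (hW : W.IsPath) (hb : b ∈ S) :
    ∃ y ∈ S, ∃ Q : G.Walk a y, Q.IsPath ∧ Q.support ⊆ W.support ∧
      ∀ z ∈ Q.support, z ∈ S → z = y := by
  induction W with
  | nil => exact ⟨_, hb, Walk.nil, by simp, by simp, by simp⟩
  | @cons a _ _ h W ih =>
    by_cases ha : a ∈ S
    · exact ⟨a, ha, Walk.nil, by simp, by simp, by simp⟩
    rw [cons_isPath_iff] at hW
    obtain ⟨y, hy, Q, hQ, hQW, hQS⟩ := ih hW.1 hb
    refine ⟨y, hy, cons h Q, (cons_isPath_iff _ _).2 ⟨hQ, fun haQ => hW.2 (hQW haQ)⟩,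
      List.cons_subset_cons _ hQW, ?_⟩
    rintro z hz hzS
    rcases List.mem_cons.1 hz with rfl | hz
    exacts [absurd hzS ha, hQS z hz hzS]

lemma IsPath.exists_subpath_through (S : Set V) {a b r : V} {T : G.Walk a b} (hT : T.IsPath)
    (ha : a ∈ S) (hb : b ∈ S) (hr : r ∈ T.support) (hrS : r ∉ S) :
    ∃ (x y : V) (P : G.Walk x y), P.IsPath ∧ x ≠ y ∧ x ∈ S ∧ y ∈ S ∧ r ∈ P.support ∧
      ∀ z ∈ P.support, z ∈ S → z = x ∨ z = y := by
  classical
  set A := T.takeUntil r hr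
  set B := T.dropUntil r hr
  have hAB : ∀ z ∈ A.support, z ∈ B.support → z = r := by
    intro z hzA hzB
    have hnd := hT.support_nodup
    rw [← T.take_spec hr, support_append, List.nodup_append'] at hnd
    rcases B.mem_support_iff.1 hzB with rfl | hzB
    exacts [rfl, absurd hzB (hnd.2.2 hzA)]
  obtain ⟨x, hx, Qa, hQa, hQaA, hQaS⟩ :=
    (hT.takeUntil hr).reverse.exists_subpath_to_first_mem S (by simpa using ha)
  obtain ⟨y, hy, Qb, hQb, hQbB, hQbS⟩ := (hT.dropUntil hr).exists_subpath_to_first_mem S hb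
  have hQaA' : ∀ z ∈ Qa.support, z ∈ A.support := fun z hz => by simpa using hQaA hz
  have hxy : x ≠ y := by
    rintro rfl
    exact hrS (hAB x (hQaA' x Qa.end_mem_support) (hQbB Qb.end_mem_support) ▸ hx)
  refine ⟨x, y, Qa.reverse.append Qb, ?_, hxy, hx, hy, by simp, fun z hz hzS => ?_⟩
  · rw [isPath_def, support_append, support_reverse, List.nodup_append']
    refine ⟨List.nodup_reverse.2 hQa.support_nodup, hQb.support_nodup.tail, fun z hza hzb => ?_⟩
    obtain rfl := hAB z (hQaA' z (List.mem_reverse.1 hza)) (hQbB (List.mem_of_mem_tail hzb))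
    have hnd := hQb.support_nodup
    rw [← Qb.cons_tail_support, List.nodup_cons] at hnd
    exact hnd.1 hzb
  · rw [mem_support_append_iff, support_reverse, List.mem_reverse] at hz
    rcases hz with hz | hz
    exacts [.inl (hQaS z hz hzS), .inr (hQbS z hz hzS)]

lemma IsCycle.exists_subpath_through (S : Set V) {u v w r : V} {c : G.Walk u u}
    (hc : c.IsCycle) (hv : v ∈ c.support) (hvS : v ∈ S) (hw : w ∈ c.support) (hwS : w ∈ S)
    (hvw : v ≠ w) (hr : r ∈ c.support) (hrS : r ∉ S) :
    ∃ (x y : V) (P : G.Walk x y), P.IsPath ∧ x ≠ y ∧ x ∈ S ∧ y ∈ S ∧ r ∈ P.support ∧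
      ∀ z ∈ P.support, z ∈ S → z = x ∨ z = y := by
  obtain ⟨p, q, hp, hq, -, hpq, -, -⟩ := hc.exists_internallyDisjoint_paths hv hw hvw
  rcases (hpq r).1 hr with hr | hr
  exacts [hp.exists_subpath_through S hvS hwS hr hrS, hq.exists_subpath_through S hvS hwS hr hrS]

lemma IsPath.mk_notMem_edges_of_mem_support {x y r : V} {p : G.Walk x y} (hp : p.IsPath)
    (hr : r ∈ p.support) (hrx : r ≠ x) (hry : r ≠ y) : s(x, y) ∉ p.edges := fun h => by
  rw [hp.eq_adj_toWalk_of_mem_edges h] at hr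
  simp_all

lemma eq_mk_of_mem_edges_of_mem_edges {x y u v : V} {p : G.Walk x y} {c : G.Walk u v}
    (h : ∀ z ∈ p.support, z ∈ c.support → z = x ∨ z = y) {e : Sym2 V} (hp : e ∈ p.edges)
    (hc : e ∈ c.edges) : e = s(x, y) := by
  induction e using Sym2.ind with
  | _ a b =>
    have hab := (c.adj_of_mem_edges hc).ne
    rcases h a (p.fst_mem_support_of_mem_edges hp) (c.fst_mem_support_of_mem_edges hc)
      with rfl | rfl <;>
    rcases h b (p.snd_mem_support_of_mem_edges hp) (c.snd_mem_support_of_mem_edges hc)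
      with rfl | rfl <;>
    simp_all [Sym2.eq_swap]

lemma IsCycle.exists_ear {u u' v w : V} {c : G.Walk u u} {c' : G.Walk u' u'} (hc' : c'.IsCycle)
    {e : Sym2 V} (he' : e ∈ c'.edges) (he : e ∉ c.edges) (hvw : v ≠ w)
    (hv : v ∈ c.support) (hv' : v ∈ c'.support) (hw : w ∈ c.support) (hw' : w ∈ c'.support) :
    ∃ (x y : V) (P : G.Walk x y), P.IsPath ∧ x ≠ y ∧ x ∈ c.support ∧ y ∈ c.support ∧
      (∀ z ∈ P.support, z ∈ c.support → z = x ∨ z = y) ∧ P.edges.Disjoint c.edges := by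
  induction e using Sym2.ind with
  | _ a b =>
    have hab := c'.adj_of_mem_edges he'
    by_cases habc : a ∈ c.support ∧ b ∈ c.support
    · exact ⟨a, b, hab.toWalk, by simp [hab.ne], hab.ne, habc.1, habc.2, by simp,
        by simpa using he⟩
    obtain ⟨r, hr', hr⟩ : ∃ r ∈ c'.support, r ∉ c.support := by
      by_cases ha : a ∈ c.support
      exacts [⟨b, c'.snd_mem_support_of_mem_edges he', fun hb => habc ⟨ha, hb⟩⟩,
        ⟨a, c'.fst_mem_support_of_mem_edges he', ha⟩]
    obtain ⟨x, y, P, hP, hxy, hx, hy, hrP, hPc⟩ :=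
      hc'.exists_subpath_through {z | z ∈ c.support} hv' hv hw' hw hvw hr' hr
    refine ⟨x, y, P, hP, hxy, hx, hy, hPc, fun e heP hec => ?_⟩
    rw [eq_mk_of_mem_edges_of_mem_edges hPc heP hec] at heP
    exact hP.mk_notMem_edges_of_mem_support hrP (fun h => hr (h ▸ hx)) (fun h => hr (h ▸ hy)) heP

theorem IsCycle.isMinorOf_or_hasTwoCyclesSharingOneEdge_of_ear {u x y : V} {c : G.Walk u u}
    (hc : c.IsCycle) {P : G.Walk x y} (hP : P.IsPath) (hxy : x ≠ y) (hx : x ∈ c.support)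
    (hy : y ∈ c.support) (hPc : ∀ z ∈ P.support, z ∈ c.support → z = x ∨ z = y)
    (hPe : P.edges.Disjoint c.edges) :
    (completeBipartiteGraph (Fin 2) (Fin 3)).IsMinorOf G ∨ G.HasTwoCyclesSharingOneEdge := by
  obtain ⟨p, q, hp, hq, hpq, hcpq, hpe, hqe⟩ := hc.exists_internallyDisjoint_paths hx hy hxy
  have hPint : ∀ r : G.Walk x y, (∀ z ∈ r.support, z ∈ c.support) → r.edges ⊆ c.edges →
      P.InternallyDisjoint r :=
    fun r hr hre => ⟨fun z hzP hzr => hPc z hzP (hr z hzr), fun _ heP her => hPe heP (hre her)⟩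
  have hPp := hPint p (fun z hz => (hcpq z).2 (.inl hz)) hpe
  have hPq := hPint q (fun z hz => (hcpq z).2 (.inr hz)) hqe
  refine completeBipartiteGraph_isMinorOf_or_hasTwoCyclesSharingOneEdge_of_paths hxy ![p, q, P]
    (fun i => by fin_cases i <;> assumption) fun i j hij => ?_
  fin_cases i <;> fin_cases j <;>
    first
      | exact absurd rfl hij
      | exact hpq | exact hpq.symm | exact hPp | exact hPp.symm | exact hPq | exact hPq.symm

end Walk

end SimpleGraph

theorem k23_minor_or_cycles_sharing_one_edge_general {V : Type*}
    {G : SimpleGraph V} {u u' : V} (c : G.Walk u u) (c' : G.Walk u' u')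
    (hc : c.IsCycle) (hc' : c'.IsCycle)
    (hedges : {e : Sym2 V | e ∈ c.edges} ≠ {e : Sym2 V | e ∈ c'.edges})
    (hvert : ∃ v w : V, v ≠ w ∧ v ∈ c.support ∧ v ∈ c'.support ∧
      w ∈ c.support ∧ w ∈ c'.support) :
    (completeBipartiteGraph (Fin 2) (Fin 3)).IsMinorOf G ∨
    ∃ (x y : V) (d : G.Walk x x) (d' : G.Walk y y),
      d.IsCycle ∧ d'.IsCycle ∧
      {e : Sym2 V | e ∈ d.edges} ≠ {e : Sym2 V | e ∈ d'.edges} ∧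
      ∃ a b : V, G.Adj a b ∧
        s(a, b) ∈ d.edges ∧ s(a, b) ∈ d'.edges ∧
        (∀ e, e ∈ d.edges → e ∈ d'.edges → e = s(a, b)) ∧
        (∀ v, v ∈ d.support → v ∈ d'.support → v = a ∨ v = b) := by
  obtain ⟨v, w, hvw, hv, hv', hw, hw'⟩ := hvert
  obtain ⟨e, he', he⟩ | ⟨e, he, he'⟩ :
      (∃ e ∈ c'.edges, e ∉ c.edges) ∨ ∃ e ∈ c.edges, e ∉ c'.edges := by
    by_contra! h
    exact hedges (Set.ext fun e => ⟨h.2 e, h.1 e⟩)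
  · obtain ⟨x, y, P, hP, hxy, hx, hy, hPc, hPe⟩ := hc'.exists_ear he' he hvw hv hv' hw hw'
    exact hc.isMinorOf_or_hasTwoCyclesSharingOneEdge_of_ear hP hxy hx hy hPc hPe
  · obtain ⟨x, y, P, hP, hxy, hx, hy, hPc, hPe⟩ := hc.exists_ear he he' hvw hv' hv hw' hw
    exact hc'.isMinorOf_or_hasTwoCyclesSharingOneEdge_of_ear hP hxy hx hy hPc hPe

/-- If a graph contains two cycles with distinct edge sets sharing at least two
vertices, then either it contains a `K_{2,3}` minor, or it contains two cycles with
distinct edge sets whose intersection is exactly one edge together with its two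
endpoints. -/
theorem k23_minor_or_cycles_sharing_one_edge {V : Type*} [Fintype V]
    {G : SimpleGraph V} {u u' : V} (c : G.Walk u u) (c' : G.Walk u' u')
    (hc : c.IsCycle) (hc' : c'.IsCycle)
    (hedges : {e : Sym2 V | e ∈ c.edges} ≠ {e : Sym2 V | e ∈ c'.edges})
    (hvert : ∃ v w : V, v ≠ w ∧ v ∈ c.support ∧ v ∈ c'.support ∧
      w ∈ c.support ∧ w ∈ c'.support) :
    (completeBipartiteGraph (Fin 2) (Fin 3)).IsMinorOf G ∨
    ∃ (x y : V) (d : G.Walk x x) (d' : G.Walk y y),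
      d.IsCycle ∧ d'.IsCycle ∧
      {e : Sym2 V | e ∈ d.edges} ≠ {e : Sym2 V | e ∈ d'.edges} ∧
      ∃ a b : V, G.Adj a b ∧
        s(a, b) ∈ d.edges ∧ s(a, b) ∈ d'.edges ∧
        (∀ e, e ∈ d.edges → e ∈ d'.edges → e = s(a, b)) ∧
        (∀ v, v ∈ d.support → v ∈ d'.support → v = a ∨ v = b) :=
  k23_minor_or_cycles_sharing_one_edge_general c c' hc hc' hedges hvert
end

section
/- The Cartesian product K_4 □ P_2 is not a minor of the Cartesian product K_{2,3} □ P_2. -/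
/-!
If the branch set of `w` is a single vertex `v`, the branch sets of the neighbours of `w` are
disjoint and each contains a neighbour of `v`, so `deg w ≤ deg v`. Now `K_4 □ P_2` is
`4`-regular, while in `K_{2,3} □ P_2` only the four vertices over the part of size two have
degree `4`. Hence at most four of the eight branch sets are singletons, and together they cover
at least `4 + 2 * 4 = 12` vertices, more than the ten available.
-/

open Finset Fintype Function

namespace SimpleGraph

instance (n : ℕ) : DecidableRel (pathGraph n).Adj := fun _ _ =>
  decidable_of_iff _ pathGraph_adj.symm

instance {α : Type*} [DecidableEq α] : DecidableRel (completeGraph α).Adj := fun a b =>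
  decidable_of_iff (a ≠ b) Iff.rfl

instance {α β : Type*} : DecidableRel (completeBipartiteGraph α β).Adj := fun a b =>
  decidable_of_iff (a.isLeft ∧ b.isRight ∨ a.isRight ∧ b.isLeft) Iff.rfl

instance {α β : Type*} {G : SimpleGraph α} {H : SimpleGraph β} [DecidableEq α] [DecidableEq β]
    [DecidableRel G.Adj] [DecidableRel H.Adj] : DecidableRel (G □ H).Adj := fun _ _ =>
  decidable_of_iff _ boxProd_adj.symm

variable {W V : Type*} {H : SimpleGraph W} {G : SimpleGraph V} {B : W → Finset V}

theorem degree_le_degree_of_branchSet_eq_singleton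
    (hdisj : Pairwise (Disjoint on B))
    (hadj : ∀ ⦃w w'⦄, H.Adj w w' → ∃ a ∈ B w, ∃ b ∈ B w', G.Adj a b)
    {w : W} {v : V} (hw : B w = {v}) [Fintype (H.neighborSet w)] [Fintype (G.neighborSet v)] :
    H.degree w ≤ G.degree v := by
  classical
  calc H.degree w = #(H.neighborFinset w) := (card_neighborFinset_eq_degree H w).symm
    _ ≤ #((H.neighborFinset w).biUnion fun w' => {b ∈ B w' | G.Adj v b}) := by
        refine card_le_card_biUnion (fun _ _ _ _ h => disjoint_filter_filter (hdisj h)) ?_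
        intro w' hw'
        obtain ⟨a, ha, b, hb, hab⟩ := hadj (mem_neighborFinset _ _ _ |>.1 hw')
        rw [hw, mem_singleton] at ha
        exact ⟨b, mem_filter.2 ⟨hb, ha ▸ hab⟩⟩
    _ ≤ #(G.neighborFinset v) :=
        card_le_card <| biUnion_subset.2 fun _ _ _ hb =>
          (mem_neighborFinset _ _ _).2 (mem_filter.1 hb).2
    _ = G.degree v := card_neighborFinset_eq_degree G v

theorem two_mul_card_le_of_branchSets [Fintype W] [Fintype V]
    [DecidableRel H.Adj] [DecidableRel G.Adj] {d : ℕ} (hd : ∀ w, d ≤ H.degree w)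
    (hne : ∀ w, (B w).Nonempty) (hdisj : Pairwise (Disjoint on B))
    (hadj : ∀ ⦃w w'⦄, H.Adj w w' → ∃ a ∈ B w, ∃ b ∈ B w', G.Adj a b) :
    2 * card W ≤ card V + #{v | d ≤ G.degree v} := by
  classical
  have hsum : ∑ w, #(B w) ≤ card V := by
    rw [← card_biUnion fun _ _ _ _ h => hdisj h]
    exact card_le_univ _
  have hsingletons : #{w | #(B w) = 1} ≤ #{v | d ≤ G.degree v} := by
    refine (card_le_card_biUnion (fun _ _ _ _ h => hdisj h) fun w _ => hne w).trans
      (card_le_card <| biUnion_subset.2 fun w hw v hv => ?_)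
    obtain ⟨a, ha⟩ := card_eq_one.1 (mem_filter.1 hw).2
    rw [ha, mem_singleton] at hv
    subst hv
    exact mem_filter.2 ⟨mem_univ _, (hd w).trans
      (degree_le_degree_of_branchSet_eq_singleton hdisj hadj ha)⟩
  have htwo : ∀ w, 2 ≤ #(B w) + if #(B w) = 1 then 1 else 0 := fun w => by
    have := (hne w).card_pos
    split_ifs <;> omega
  calc 2 * card W = ∑ _ : W, 2 := by simp [mul_comm]
    _ ≤ ∑ w, (#(B w) + if #(B w) = 1 then 1 else 0) := sum_le_sum fun w _ => htwo w
    _ = ∑ w, #(B w) + #{w | #(B w) = 1} := by rw [sum_add_distrib, card_filter]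
    _ ≤ card V + #{v | d ≤ G.degree v} := add_le_add hsum hsingletons

theorem IsMinorOf.two_mul_card_le [Fintype W] [Fintype V]
    [DecidableRel H.Adj] [DecidableRel G.Adj] (h : H.IsMinorOf G) {d : ℕ}
    (hd : ∀ w, d ≤ H.degree w) : 2 * card W ≤ card V + #{v | d ≤ G.degree v} := by
  classical
  obtain ⟨φ, hconn, hdisj, hadj⟩ := h
  refine two_mul_card_le_of_branchSets (B := fun w => (φ w).toFinset) hd
    (fun w => Set.toFinset_nonempty.2 (Set.nonempty_coe_sort.1 (hconn w).nonempty))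
    (fun w w' h => Set.disjoint_toFinset.2 (hdisj h)) fun w w' h => ?_
  simpa only [Set.mem_toFinset] using hadj h

end SimpleGraph

/-- The Cartesian product `K_4 □ P_2` is not a minor of `K_{2,3} □ P_2`. -/
theorem k4p2_not_minor_k23p2 :
    ¬ ((SimpleGraph.completeGraph (Fin 4)) □ (SimpleGraph.pathGraph 2)).IsMinorOf
        ((completeBipartiteGraph (Fin 2) (Fin 3)) □ (SimpleGraph.pathGraph 2)) :=
  fun h => absurd (h.two_mul_card_le (d := 4) (by decide)) (by decide)
end

section
/- The Cartesian product K_4 □ P_2 is not a minor of the Cartesian product K_{1,3} □ P_3. -/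
namespace SimpleGraph

variable {V W β γ : Type*}

def vertexBoundary (G : SimpleGraph V) (s : Set V) : Set V :=
  {b | b ∉ s ∧ ∃ a ∈ s, G.Adj a b}

theorem encard_neighborSet_le_encard_vertexBoundary {H : SimpleGraph W} {G : SimpleGraph V}
    {φ : W → Set V} (hdisj : Pairwise fun w w' => Disjoint (φ w) (φ w'))
    (hadj : ∀ ⦃w w'⦄, H.Adj w w' → ∃ a ∈ φ w, ∃ b ∈ φ w', G.Adj a b) (w : W) :
    (H.neighborSet w).encard ≤ (G.vertexBoundary (φ w)).encard := by
  choose a ha b hb hab using fun w' (h : H.Adj w w') => hadj h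
  let f : H.neighborSet w → G.vertexBoundary (φ w) := fun w' =>
    ⟨b w'.1 w'.2, fun hw => (hdisj (H.ne_of_adj w'.2)).notMem_of_mem_left hw (hb _ _),
      a w'.1 w'.2, ha _ _, hab _ _⟩
  refine ENat.card_le_card_of_injective (f := f) fun w₁ w₂ h => Subtype.ext ?_
  by_contra hne
  have hb₁₂ : b w₁.1 w₁.2 = b w₂.1 w₂.2 := congrArg Subtype.val h
  exact (hdisj hne).notMem_of_mem_left (hb₁₂ ▸ hb _ _) (hb _ _)

theorem fst_eq_of_preconnected_induce_boxProd {K : SimpleGraph β} {G : SimpleGraph γ}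
    {s : Set (β × γ)} (hs : ((K □ G).induce s).Preconnected)
    (hK : ∀ a ∈ s, ∀ b ∈ s, ¬ K.Adj a.1 b.1) {a b : β × γ} (ha : a ∈ s) (hb : b ∈ s) :
    a.1 = b.1 := by
  suffices ∀ x y : s, ((K □ G).induce s).Walk x y → x.1.1 = y.1.1 from
    this ⟨a, ha⟩ ⟨b, hb⟩ (hs _ _).some
  intro x y p
  induction p with
  | nil => rfl
  | @cons u v w h _ ih =>
    rcases boxProd_adj.mp h with ⟨hK', -⟩ | ⟨-, hfst⟩
    · exact absurd hK' (hK _ u.2 _ v.2)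
    · exact hfst.trans ih

theorem encard_vertexBoundary_le_of_subset_fiber {G : SimpleGraph γ}
    {s : Set ((Fin 1 ⊕ β) × γ)} {j : β} (hs : ∀ a ∈ s, a.1 = Sum.inr j) :
    ((completeBipartiteGraph (Fin 1) β □ G).vertexBoundary s).encard ≤ ENat.card γ := by
  have hmem : ∀ b ∈ (completeBipartiteGraph (Fin 1) β □ G).vertexBoundary s,
      b = (Sum.inl 0, b.2) ∧ (Sum.inr j, b.2) ∈ s ∨ b = (Sum.inr j, b.2) ∧ b ∉ s := by
    rintro ⟨x, i⟩ ⟨hbs, a, has, hab⟩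
    have ha := hs a has
    rcases boxProd_adj.mp hab with ⟨hK, h2⟩ | ⟨-, h1⟩
    · left
      obtain ⟨k⟩ | k := x
      · exact ⟨by rw [Subsingleton.elim k 0], (Prod.ext ha h2 : a = (Sum.inr j, i)) ▸ has⟩
      · simp [ha] at hK
    · exact .inr ⟨Prod.ext (h1.symm.trans ha) rfl, hbs⟩
  rw [← Set.encard_univ]
  refine Set.encard_le_encard_of_injOn (f := Prod.snd) (Set.mapsTo_univ _ _) ?_
  intro b hb b' hb' h
  rcases hmem b hb with ⟨hb, hin⟩ | ⟨hb, hout⟩ <;>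
    rcases hmem b' hb' with ⟨hb', hin'⟩ | ⟨hb', hout'⟩
  · rw [hb, hb', h]
  · exact absurd (h ▸ hin) (hb' ▸ hout')
  · exact absurd (h ▸ hin') (hb ▸ hout)
  · rw [hb, hb', h]

theorem encard_vertexBoundary_le_of_connected_of_forall_notMem {G : SimpleGraph γ}
    {s : Set ((Fin 1 ⊕ β) × γ)}
    (hconn : ((completeBipartiteGraph (Fin 1) β □ G).induce s).Connected)
    (hs : ∀ i, (Sum.inl 0, i) ∉ s) :
    ((completeBipartiteGraph (Fin 1) β □ G).vertexBoundary s).encard ≤ ENat.card γ := by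
  have hright : ∀ a ∈ s, a.1.isRight := by
    rintro ⟨⟨k⟩ | j, i⟩ ha
    · exact absurd (Subsingleton.elim k 0 ▸ ha) (hs i)
    · rfl
  obtain ⟨⟨a₀, ha₀⟩⟩ := hconn.nonempty
  obtain ⟨j, hj⟩ := Sum.isRight_iff.mp (hright a₀ ha₀)
  refine encard_vertexBoundary_le_of_subset_fiber (j := j) fun a ha => hj ▸ ?_
  refine fst_eq_of_preconnected_induce_boxProd hconn.preconnected ?_ ha ha₀
  intro a ha b hb
  simp [hright a ha, hright b hb]

theorem encard_le_of_isMinorOf_completeBipartiteGraph_boxProd {H : SimpleGraph W}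
    {G : SimpleGraph γ} (hminor : H.IsMinorOf (completeBipartiteGraph (Fin 1) β □ G))
    (hdeg : ∀ w, ENat.card γ < (H.neighborSet w).encard) : ENat.card W ≤ ENat.card γ := by
  obtain ⟨φ, hconn, hdisj, hadj⟩ := hminor
  have hcenter : ∀ w, ∃ i, (Sum.inl 0, i) ∈ φ w := by
    intro w
    by_contra! h
    exact (hdeg w).not_ge <| (encard_neighborSet_le_encard_vertexBoundary hdisj hadj w).trans
      (encard_vertexBoundary_le_of_connected_of_forall_notMem (hconn w) h)
  choose c hc using hcenter
  refine ENat.card_le_card_of_injective (f := c) fun w w' h => ?_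
  by_contra hne
  exact (hdisj hne).notMem_of_mem_left (hc w) (h ▸ hc w')

end SimpleGraph

/-- The Cartesian product `K_4 □ P_2` is not a minor of `K_{1,3} □ P_3`. -/
theorem k4p2_not_minor_k13p3 :
    ¬ ((SimpleGraph.completeGraph (Fin 4)) □ (SimpleGraph.pathGraph 2)).IsMinorOf
        ((completeBipartiteGraph (Fin 1) (Fin 3)) □ (SimpleGraph.pathGraph 3)) := by
  intro hminor
  rw [SimpleGraph.pathGraph_two_eq_top] at hminor
  refine absurd (SimpleGraph.encard_le_of_isMinorOf_completeBipartiteGraph_boxProd hminor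
    fun w => ?_) (by norm_num)
  rw [Set.encard, ENat.card_eq_coe_fintype_card, ENat.card_eq_coe_fintype_card,
    SimpleGraph.card_neighborSet_eq_degree]
  decide +revert
end
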